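/- For every d ≥ 1, if n ≥ Ram(4,6;2^d) then the canonical interval order I_n has Boolean dimension greater than d. -/

import Mathlib

/-- A linear extension of the partial order on `α`: a linear order relation
containing the partial order. -/
def IsLinearExtension {α : Type*} [PartialOrder α] (r : α → α → Prop) : Prop :=
  IsLinearOrder α r ∧ ∀ x y : α, x ≤ y → r x y

/-- `P` has a realizer of size `d`: `d` linear extensions whose intersection is the order. -/
def HasRealizer (α : Type*) [PartialOrder α] (d : ℕ) : Prop :=
  ∃ L : Fin d → (α → α → Prop),
    (∀ i, IsLinearExtension (L i)) ∧ (∀ x y : α, (∀ i, L i x y) → x ≤ y)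

/-- The Dushnik–Miller dimension of a poset. -/
noncomputable def dimDM (α : Type*) [PartialOrder α] : ℕ :=
  sInf {d | 0 < d ∧ HasRealizer α d}

/-- A Boolean realizer of size `d`: `d` linear orders on the ground set together with a
"decoder" `τ` determining the order from the query vector. -/
def HasBooleanRealizer (α : Type*) [PartialOrder α] (d : ℕ) : Prop :=
  ∃ (B : Fin d → (α → α → Prop)) (τ : (Fin d → Prop) → Prop),
    (∀ i, IsLinearOrder α (B i)) ∧
    ∀ x y : α, x ≠ y → (x < y ↔ τ (fun i => B i x y))

/-- The Boolean dimension of a poset. -/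
noncomputable def bdim (α : Type*) [PartialOrder α] : ℕ :=
  sInf {d | 0 < d ∧ HasBooleanRealizer α d}

/-- A partial linear extension of the poset `α`: a linear extension of a subposet. -/
structure PLE (α : Type*) [PartialOrder α] where
  S : Set α
  r : α → α → Prop
  mem_of_rel : ∀ x y, r x y → x ∈ S ∧ y ∈ S
  refl : ∀ x ∈ S, r x x
  antisymm' : ∀ x y, r x y → r y x → x = y
  trans' : ∀ x y z, r x y → r y z → r x z
  total : ∀ x ∈ S, ∀ y ∈ S, r x y ∨ r y x
  extends_le : ∀ x ∈ S, ∀ y ∈ S, x ≤ y → r x y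

/-- A family of ple's is a local realizer when every comparability appears in some member
and every incomparable pair is reversed in some member. -/
def IsLocalRealizer {α : Type*} [PartialOrder α] {t : ℕ} (L : Fin t → PLE α) : Prop :=
  (∀ x y : α, x ≤ y → ∃ i, x ∈ (L i).S ∧ y ∈ (L i).S) ∧
  (∀ x y : α, ¬ x ≤ y → ¬ y ≤ x → ∃ i, (L i).r y x)

/-- The local dimension of a poset. -/
noncomputable def ldim (α : Type*) [PartialOrder α] : ℕ :=
  sInf {k | 0 < k ∧ ∃ (t : ℕ) (L : Fin t → PLE α),
    IsLocalRealizer L ∧ ∀ u : α, ({i | u ∈ (L i).S} : Set (Fin t)).ncard ≤ k}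

/-- Ramsey property: every `r`-coloring of the `k`-element subsets of an `N`-element set
admits an `h`-element set all of whose `k`-element subsets get the same color. -/
def RamseyProp (N k h r : ℕ) : Prop :=
  ∀ φ : Finset (Fin N) → Fin r, ∃ H : Finset (Fin N), H.card = h ∧
    ∃ c : Fin r, ∀ S ⊆ H, S.card = k → φ S = c

/-- The Ramsey number `Ram(k,h;r)`. -/
noncomputable def Ram (k h r : ℕ) : ℕ := sInf {N | RamseyProp N k h r}

/-- The canonical interval order `I_n`: closed intervals `[i,j]` with `i < j`,
where `[i,j] < [k,l]` iff `j < k`. -/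
def CIO (n : ℕ) := {p : Fin n × Fin n // p.1 < p.2}

instance (n : ℕ) : PartialOrder (CIO n) where
  le x y := x = y ∨ x.val.2 < y.val.1
  le_refl x := Or.inl rfl
  le_trans := by
    rintro x y z (rfl | h) (rfl | h')
    · exact Or.inl rfl
    · exact Or.inr h'
    · exact Or.inr h
    · exact Or.inr (h.trans (y.prop.trans h'))
  le_antisymm := by
    rintro x y (rfl | h) (h' | h'')
    · rfl
    · rfl
    · subst h'; exact absurd (h.trans y.prop) (lt_irrefl _)
    · exact absurd (h.trans (y.prop.trans (h''.trans x.prop))) (lt_irrefl _)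


section RamseyAux
open Finset

theorem my_ramsey_exists (k r : ℕ) : ∀ h : ℕ, ∃ M : ℕ,
    ∀ {α : Type} [DecidableEq α] (A : Finset α), M ≤ A.card →
      ∀ φ : Finset α → Fin r, ∃ H ⊆ A, H.card = h ∧ ∃ c : Fin r,
        ∀ S ⊆ H, S.card = k → φ S = c := by
  induction k with
  | zero =>
    intro h
    refine ⟨h, fun {α} _ A hA φ => ?_⟩
    obtain ⟨H, hHA, hHcard⟩ := Finset.exists_subset_card_eq hA
    exact ⟨H, hHA, hHcard, φ ∅, fun S _ hS => by rw [Finset.card_eq_zero.mp hS]⟩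
  | succ k IH =>
    choose MF hMF using IH
    intro h
    rcases Nat.eq_zero_or_pos r with hr | hr
    · exact ⟨0, fun {α} _ A _ φ => (hr ▸ φ ∅).elim0⟩
    set t := r * h + 1 + k with ht
    set g : ℕ → ℕ := fun m => Nat.rec 0 (fun _ ih => MF ih + 1) m with hg
    have hgs : ∀ m, g (m + 1) = MF (g m) + 1 := fun m => rfl
    refine ⟨max (g t) h, fun {α} _ A hA φ => ?_⟩
    -- build a list of points where the color of a (k+1)-set depends only on its first element
    have build : ∀ (m : ℕ) (A : Finset α), g m ≤ A.card →
        ∃ (l : List α) (co : List (Fin r)),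
          l.length = m ∧ co.length = m ∧ l.Nodup ∧ (∀ x ∈ l, x ∈ A) ∧
          ∀ (i : ℕ) (hil : i < l.length) (hic : i < co.length) (S : Finset α),
            (∀ x ∈ S, x ∈ l.drop (i+1)) → S.card = k →
            φ (insert l[i] S) = co[i] := by
      intro m
      induction m with
      | zero =>
        exact fun A _ => ⟨[], [], rfl, rfl, List.nodup_nil, by simp, fun i hil => by simp at hil⟩
      | succ m ih =>
        intro A hA
        rw [hgs] at hA
        have hA0 : A.Nonempty := Finset.card_pos.mp (by omega)
        obtain ⟨a, haA⟩ := hA0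
        have herase : MF (g m) ≤ (A.erase a).card := by
          rw [Finset.card_erase_of_mem haA]; omega
        obtain ⟨H, hHsub, hHcard, c₀, hhom⟩ := hMF (g m) (A.erase a) herase
          (fun S => φ (insert a S))
        obtain ⟨l, co, hl, hc, hnd, hmem, hkey⟩ := ih H (le_of_eq hHcard.symm)
        refine ⟨a :: l, c₀ :: co, by simp [hl], by simp [hc], ?_, ?_, ?_⟩
        · exact List.nodup_cons.mpr ⟨fun hal => (Finset.mem_erase.mp (hHsub (hmem a hal))).1 rfl, hnd⟩
        · intro x hx
          rcases List.mem_cons.mp hx with rfl | hx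
          · exact haA
          · exact Finset.mem_of_mem_erase (hHsub (hmem x hx))
        · intro i hil hic S hS hScard
          match i with
          | 0 =>
            simp only [List.getElem_cons_zero, List.drop_succ_cons, List.drop_zero] at hS ⊢
            exact hhom S (fun x hx => hmem x (hS x hx)) hScard
          | (j+1) =>
            simp only [List.getElem_cons_succ, List.drop_succ_cons] at hS ⊢
            exact hkey j (by simpa using hil) (by simpa using hic) S hS hScard
    obtain ⟨l, co, hl, hc, hnd, hmemA, hkey⟩ := build t A (le_trans (le_max_left _ _) hA)
    by_cases hhk : h ≤ k
    · -- no (k+1)-subsets of an h-set: any H works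
      obtain ⟨H, hHA, hHcard⟩ := Finset.exists_subset_card_eq (le_trans (le_max_right _ _) hA)
      refine ⟨H, hHA, hHcard, ⟨0, hr⟩, fun S hSH hScard => absurd (Finset.card_le_card hSH) ?_⟩
      rw [hScard, hHcard]; omega
    push_neg at hhk
    have hx₀ : A.Nonempty := Finset.card_pos.mp (by omega)
    obtain ⟨x₀, hx₀A⟩ := hx₀
    -- pigeonhole on the colors of the first r*h+1 indices
    have hpig : ∃ γ : Fin r, h < ((Finset.range (r * h + 1)).filter
        (fun i => co.getD i ⟨0, hr⟩ = γ)).card := by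
      obtain ⟨γ, _, hγ⟩ := Finset.exists_lt_card_fiber_of_mul_lt_card_of_maps_to
        (f := fun i => co.getD i ⟨0, hr⟩) (s := Finset.range (r * h + 1))
        (t := (Finset.univ : Finset (Fin r))) (n := h) (fun a _ => Finset.mem_univ _)
        (by simp [Finset.card_range])
      exact ⟨γ, hγ⟩
    obtain ⟨γ, hγ⟩ := hpig
    obtain ⟨I, hIsub, hIcard⟩ := Finset.exists_subset_card_eq
      (show h - k ≤ _ from le_trans (by omega) (le_of_lt hγ))
    set J : Finset ℕ := I ∪ Finset.Ico (r * h + 1) t with hJ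
    have hJlt : ∀ i ∈ J, i < t := by
      intro i hi
      rcases Finset.mem_union.mp hi with hi | hi
      · have := Finset.mem_range.mp (Finset.mem_filter.mp (hIsub hi)).1; omega
      · exact (Finset.mem_Ico.mp hi).2
    have hinj : ∀ i ∈ J, ∀ j ∈ J, l.getD i x₀ = l.getD j x₀ → i = j := by
      intro i hi j hj hij
      have hi' : i < l.length := by rw [hl]; exact hJlt i hi
      have hj' : j < l.length := by rw [hl]; exact hJlt j hj
      rw [List.getD_eq_getElem _ _ hi', List.getD_eq_getElem _ _ hj'] at hij
      exact (List.Nodup.getElem_inj_iff hnd).mp hij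
    have hJcard : J.card = h := by
      rw [hJ, Finset.card_union_of_disjoint, hIcard, Nat.card_Ico]
      · omega
      · refine Finset.disjoint_left.mpr fun i hiI hiIco => ?_
        have := Finset.mem_range.mp (Finset.mem_filter.mp (hIsub hiI)).1
        have := (Finset.mem_Ico.mp hiIco).1
        omega
    refine ⟨J.image (fun i => l.getD i x₀), ?_, ?_, γ, ?_⟩
    · intro x hx
      obtain ⟨i, hiJ, rfl⟩ := Finset.mem_image.mp hx
      have hi' : i < l.length := by rw [hl]; exact hJlt i hiJ
      rw [List.getD_eq_getElem _ _ hi']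
      exact hmemA _ (List.getElem_mem hi')
    · rw [Finset.card_image_of_injOn hinj, hJcard]
    · intro S hSJ hScard
      set T : Finset ℕ := J.filter (fun i => l.getD i x₀ ∈ S) with hT
      have hTJ : T ⊆ J := Finset.filter_subset _ _
      have hTim : T.image (fun i => l.getD i x₀) = S := by
        apply Finset.Subset.antisymm
        · intro x hx
          obtain ⟨i, hiT, rfl⟩ := Finset.mem_image.mp hx
          exact (Finset.mem_filter.mp hiT).2
        · intro x hx
          obtain ⟨i, hiJ, rfl⟩ := Finset.mem_image.mp (hSJ hx)
          exact Finset.mem_image.mpr ⟨i, Finset.mem_filter.mpr ⟨hiJ, hx⟩, rfl⟩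
      have hTcard : T.card = k + 1 := by
        rw [← hScard, ← hTim]
        exact (Finset.card_image_of_injOn (fun i hi j hj => hinj i (hTJ hi) j (hTJ hj))).symm
      have hTne : T.Nonempty := Finset.card_pos.mp (by omega)
      set i₀ := T.min' hTne with hi₀
      have hi₀T : i₀ ∈ T := T.min'_mem hTne
      -- some element of T lies in I, hence i₀ < r*h+1 and i₀ ∈ I
      have hex : ∃ j ∈ T, j ∈ I := by
        by_contra hcon
        push_neg at hcon
        have : T ⊆ Finset.Ico (r * h + 1) t := by
          intro j hj
          rcases Finset.mem_union.mp (hTJ hj) with hji | hj'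
          · exact absurd hji (hcon j hj)
          · exact hj'
        have := Finset.card_le_card this
        rw [hTcard, Nat.card_Ico] at this; omega
      obtain ⟨j₁, hj₁T, hj₁I⟩ := hex
      have hj₁lt : j₁ < r * h + 1 := Finset.mem_range.mp (Finset.mem_filter.mp (hIsub hj₁I)).1
      have hi₀lt : i₀ < r * h + 1 := lt_of_le_of_lt (T.min'_le j₁ hj₁T) hj₁lt
      have hi₀I : i₀ ∈ I := by
        rcases Finset.mem_union.mp (hTJ hi₀T) with h' | h'
        · exact h'
        · exact absurd (Finset.mem_Ico.mp h').1 (by omega)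
      have hi₀γ : co.getD i₀ ⟨0, hr⟩ = γ := (Finset.mem_filter.mp (hIsub hi₀I)).2
      have hi₀t : i₀ < t := by omega
      have hi₀l : i₀ < l.length := by omega
      -- decompose S
      set S' : Finset α := (T.erase i₀).image (fun i => l.getD i x₀) with hS'
      have h1 : ((insert i₀ (T.erase i₀)).image fun i => l.getD i x₀)
          = insert (l.getD i₀ x₀) S' := Finset.image_insert _ _ _
      have h2 : insert i₀ (T.erase i₀) = T := Finset.insert_erase hi₀T
      have hSdec : insert (l[i₀]'hi₀l) S' = S := by
        rw [← List.getD_eq_getElem l x₀ hi₀l, ← h1, h2, hTim]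
      have hS'card : S'.card = k := by
        rw [hS', Finset.card_image_of_injOn
          (fun i hi j hj => hinj i (hTJ (Finset.mem_of_mem_erase hi)) j
            (hTJ (Finset.mem_of_mem_erase hj))),
          Finset.card_erase_of_mem hi₀T, hTcard]
        omega
      have hS'drop : ∀ x ∈ S', x ∈ l.drop (i₀ + 1) := by
        intro x hx
        obtain ⟨j, hjT, rfl⟩ := Finset.mem_image.mp hx
        have hjne : j ≠ i₀ := (Finset.mem_erase.mp hjT).1
        have hjT' : j ∈ T := Finset.mem_of_mem_erase hjT
        have hjgt : i₀ < j := lt_of_le_of_ne (T.min'_le j hjT') (Ne.symm hjne)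
        have hjl : j < l.length := by rw [hl]; exact hJlt j (hTJ hjT')
        have hdl : j - (i₀ + 1) < (l.drop (i₀ + 1)).length := by
          rw [List.length_drop]; omega
        rw [List.getD_eq_getElem _ _ hjl]
        have : l[j] = (l.drop (i₀+1))[j - (i₀+1)]'hdl := by
          simp only [List.getElem_drop]
          congr 1; omega
        rw [this]
        exact List.getElem_mem hdl
      have := hkey i₀ hi₀l (by omega) S' hS'drop hS'card
      rw [hSdec] at this
      rw [this, ← hi₀γ, List.getD_eq_getElem co _ (by omega)]

theorem my_ramseyProp_exists (r : ℕ) : ∃ N, RamseyProp N 4 6 r := by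
  obtain ⟨M, hM⟩ := my_ramsey_exists 4 r 6
  refine ⟨M, fun φ => ?_⟩
  obtain ⟨H, _, hHcard, c, hc⟩ := hM (Finset.univ : Finset (Fin M)) (by simp) φ
  exact ⟨H, hHcard, c, hc⟩

theorem my_ramseyProp_mono {N n k h r : ℕ} (hN : RamseyProp N k h r) (hle : N ≤ n) :
    RamseyProp n k h r := by
  intro φ
  obtain ⟨H, hHcard, c, hc⟩ := hN (fun S => φ (S.image (Fin.castLE hle)))
  refine ⟨H.image (Fin.castLE hle), ?_, c, ?_⟩
  · rw [Finset.card_image_of_injective _ (Fin.castLE_injective hle), hHcard]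
  · intro S hS hScard
    obtain ⟨S', hS'H, rfl⟩ := Finset.subset_image_iff.mp hS
    rw [Finset.card_image_of_injective _ (Fin.castLE_injective hle)] at hScard
    exact hc S' hS'H hScard

theorem ramseyProp_of_le {k h r n : ℕ} (hn : Ram k h r ≤ n)
    (hne : ∃ N, RamseyProp N k h r) : RamseyProp n k h r :=
  my_ramseyProp_mono (Nat.sInf_mem hne) hn

end RamseyAux

section PosetAux

variable {α : Type*} [PartialOrder α]

theorem hbr_mono {m d : ℕ} (hm : 0 < m) (hmd : m ≤ d) (h : HasBooleanRealizer α m) :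
    HasBooleanRealizer α d := by
  obtain ⟨B, τ, hlin, hiff⟩ := h
  classical
  let e : Fin d → Fin m := fun i => if hi : (i : ℕ) < m then ⟨i, hi⟩ else ⟨0, hm⟩
  refine ⟨fun i => B (e i), fun v => τ (fun j => v (Fin.castLE hmd j)), fun i => hlin _, ?_⟩
  intro x y hxy
  show x < y ↔ τ fun j => B (e (Fin.castLE hmd j)) x y
  have hfun : (fun j => B (e (Fin.castLE hmd j)) x y) = fun j => B j x y := by
    funext j
    have he : e (Fin.castLE hmd j) = j := by
      simp only [e, Fin.castLE]
      rw [dif_pos j.2]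
    rw [he]
  rw [hfun]
  exact hiff x y hxy

theorem exists_rev_extension {a b : α} (hab : ¬ a ≤ b) (hba : ¬ b ≤ a) :
    ∃ s : α → α → Prop, IsLinearOrder α s ∧ (∀ x y : α, x ≤ y → s x y) ∧ s b a := by
  let r : α → α → Prop := fun x y => x ≤ y ∨ (x ≤ b ∧ a ≤ y)
  haveI : IsPartialOrder α r := {
    refl := fun x => Or.inl le_rfl
    trans := by
      rintro x y z (hxy | ⟨h1, h2⟩) (hyz | ⟨h3, h4⟩)
      · exact Or.inl (hxy.trans hyz)
      · exact Or.inr ⟨hxy.trans h3, h4⟩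
      · exact Or.inr ⟨h1, h2.trans hyz⟩
      · exact absurd (h2.trans h3) hab
    antisymm := by
      rintro x y (hxy | ⟨h1, h2⟩) (hyx | ⟨h3, h4⟩)
      · exact le_antisymm hxy hyx
      · exact absurd ((h4.trans hxy).trans h3) hab
      · exact absurd ((h2.trans hyx).trans h1) hab
      · exact absurd (h2.trans h3) hab }
  obtain ⟨s, hs, hrs⟩ := extend_partialOrder r
  exact ⟨s, hs, fun x y hxy => hrs _ _ (Or.inl hxy), hrs _ _ (Or.inr ⟨le_rfl, le_rfl⟩)⟩

theorem exists_hbr (α : Type*) [PartialOrder α] [Fintype α] [Nonempty α] :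
    ∃ m : ℕ, 0 < m ∧ HasBooleanRealizer α m := by
  classical
  have hall : ∀ p : α × α, ∃ s : α → α → Prop, IsLinearOrder α s ∧
      (∀ x y : α, x ≤ y → s x y) ∧ (¬ p.1 ≤ p.2 → ¬ p.2 ≤ p.1 → s p.2 p.1) := by
    intro p
    by_cases h1 : p.1 ≤ p.2
    · obtain ⟨s, hs, hrs⟩ := extend_partialOrder ((· ≤ ·) : α → α → Prop)
      exact ⟨s, hs, hrs, fun h => absurd h1 h⟩
    · by_cases h2 : p.2 ≤ p.1
      · obtain ⟨s, hs, hrs⟩ := extend_partialOrder ((· ≤ ·) : α → α → Prop)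
        exact ⟨s, hs, hrs, fun _ h => absurd h2 h⟩
      · obtain ⟨s, hs, hext, hrev⟩ := exists_rev_extension h1 h2
        exact ⟨s, hs, hext, fun _ _ => hrev⟩
  choose Bs hlin hext hrev using hall
  set m := Fintype.card (α × α) with hm
  have hmpos : 0 < m := Fintype.card_pos
  let e : Fin m ≃ (α × α) := (Fintype.equivFin (α × α)).symm
  refine ⟨m, hmpos, fun i => Bs (e i), fun v => ∀ i, v i, fun i => hlin _, ?_⟩
  intro x y hxy
  constructor
  · intro hlt i
    exact hext (e i) x y hlt.le
  · intro hall'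
    by_cases hxy' : x ≤ y
    · exact lt_of_le_of_ne hxy' hxy
    by_cases hyx : y ≤ x
    · have h1 := hall' (e.symm (x, y))
      have h2 := hext (e (e.symm (x, y))) y x hyx
      have := (hlin (e (e.symm (x, y)))).toIsPartialOrder.toAntisymm.antisymm _ _ h1 h2
      exact absurd this hxy
    · have h1 := hall' (e.symm (x, y))
      have h2 : Bs (e (e.symm (x, y))) y x := by
        rw [e.apply_symm_apply]
        exact hrev (x, y) hxy' hyx
      have := (hlin (e (e.symm (x, y)))).toIsPartialOrder.toAntisymm.antisymm _ _ h1 h2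
      exact absurd this hxy


end PosetAux

theorem no_hbr (n d : ℕ) (hRam : RamseyProp n 4 6 (2 ^ d)) :
    ¬ HasBooleanRealizer (CIO n) d := by
  classical
  rintro ⟨B, τ, hlin, hiff⟩
  let enc : (Fin d → Bool) ≃ Fin (2 ^ d) :=
    Fintype.equivFinOfCardEq (by simp [Fintype.card_fun])
  let φ : Finset (Fin n) → Fin (2 ^ d) := fun S =>
    if h : S.card = 4 then
      enc (fun m => decide (B m
        ⟨(S.orderEmbOfFin h 0, S.orderEmbOfFin h 2),
          (S.orderEmbOfFin h).strictMono (by decide : (0 : Fin 4) < 2)⟩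
        ⟨(S.orderEmbOfFin h 1, S.orderEmbOfFin h 3),
          (S.orderEmbOfFin h).strictMono (by decide : (1 : Fin 4) < 3)⟩))
    else enc (fun _ => false)
  obtain ⟨H, hH6, γ, hhom⟩ := hRam φ
  set b : Fin 6 ↪o Fin n := H.orderEmbOfFin hH6 with hb
  have quad : ∀ (x y : CIO n) (i j k l : Fin 6), i < j → j < k → k < l →
      x.val = (b i, b k) → y.val = (b j, b l) →
      enc (fun m => decide (B m x y)) = γ := by
    intro x y i j k l hij hjk hkl hx hy
    have hbne : ∀ {x y : Fin 6}, x < y → b x ≠ b y := fun h => (b.strictMono h).ne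
    set S : Finset (Fin n) := {b i, b j, b k, b l} with hS
    have h4 : S.card = 4 := by
      rw [hS, Finset.card_insert_of_notMem (by
            simp only [Finset.mem_insert, Finset.mem_singleton]
            push_neg
            exact ⟨hbne hij, hbne (hij.trans hjk), hbne ((hij.trans hjk).trans hkl)⟩),
          Finset.card_insert_of_notMem (by
            simp only [Finset.mem_insert, Finset.mem_singleton]
            push_neg
            exact ⟨hbne hjk, hbne (hjk.trans hkl)⟩),
          Finset.card_insert_of_notMem (by
            simp only [Finset.mem_singleton]
            exact hbne hkl),
          Finset.card_singleton]
    have hmem : ∀ x, (![b i, b j, b k, b l]) x ∈ S := by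
      intro x
      fin_cases x <;> simp [hS]
    have hmono : StrictMono (![b i, b j, b k, b l]) := by
      intro x y hxy
      fin_cases x <;> fin_cases y <;>
        simp_all <;>
        first
          | exact hij
          | exact hjk
          | exact hkl
          | exact hij.trans hjk
          | exact hjk.trans hkl
          | exact (hij.trans hjk).trans hkl
          | exact b.strictMono hij
          | exact b.strictMono hjk
          | exact b.strictMono hkl
          | exact b.strictMono (hij.trans hjk)
          | exact b.strictMono (hjk.trans hkl)
          | exact b.strictMono ((hij.trans hjk).trans hkl)
    have huniq : ![b i, b j, b k, b l] = ⇑(S.orderEmbOfFin h4) :=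
      Finset.orderEmbOfFin_unique h4 hmem hmono
    have hSsub : S ⊆ H := by
      intro x hx
      rw [hS] at hx
      simp only [Finset.mem_insert, Finset.mem_singleton] at hx
      rcases hx with rfl | rfl | rfl | rfl <;> exact Finset.orderEmbOfFin_mem H hH6 _
    have hφS := hhom S hSsub h4
    have hv : ∀ z : Fin 4, S.orderEmbOfFin h4 z = ![b i, b j, b k, b l] z :=
      fun z => by rw [← huniq]
    have hφeq : φ S = enc (fun m => decide (B m x y)) := by
      show dite _ _ _ = _
      rw [dif_pos h4]
      apply congrArg enc
      funext m
      have hX : (⟨(S.orderEmbOfFin h4 0, S.orderEmbOfFin h4 2),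
          (S.orderEmbOfFin h4).strictMono (by decide : (0 : Fin 4) < 2)⟩ : CIO n) = x :=
        Subtype.ext (by rw [hx]; exact Prod.ext (hv 0) (hv 2))
      have hY : (⟨(S.orderEmbOfFin h4 1, S.orderEmbOfFin h4 3),
          (S.orderEmbOfFin h4).strictMono (by decide : (1 : Fin 4) < 3)⟩ : CIO n) = y :=
        Subtype.ext (by rw [hy]; exact Prod.ext (hv 1) (hv 3))
      rw [hX, hY]
    rw [← hφeq, hφS]
  -- common colour vector
  set w : Fin d → Bool := enc.symm γ with hw
  have hencw : enc w = γ := enc.apply_symm_apply γ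
  -- the four intervals
  have h02 : (0 : Fin 6) < 2 := by decide
  have h13 : (1 : Fin 6) < 3 := by decide
  have h24 : (2 : Fin 6) < 4 := by decide
  have h35 : (3 : Fin 6) < 5 := by decide
  set A0 : CIO n := ⟨(b 0, b 2), b.strictMono h02⟩ with hA0
  set A1 : CIO n := ⟨(b 1, b 3), b.strictMono h13⟩ with hA1
  set A2 : CIO n := ⟨(b 2, b 4), b.strictMono h24⟩ with hA2
  set A3 : CIO n := ⟨(b 3, b 5), b.strictMono h35⟩ with hA3
  have q1 : enc (fun m => decide (B m A0 A1)) = γ :=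
    quad A0 A1 0 1 2 3 (by decide) (by decide) (by decide) rfl rfl
  have q2 : enc (fun m => decide (B m A1 A2)) = γ :=
    quad A1 A2 1 2 3 4 (by decide) (by decide) (by decide) rfl rfl
  have q3 : enc (fun m => decide (B m A2 A3)) = γ :=
    quad A2 A3 2 3 4 5 (by decide) (by decide) (by decide) rfl rfl
  have e1 : (fun m => decide (B m A0 A1)) = w := enc.injective (q1.trans hencw.symm)
  have e2 : (fun m => decide (B m A1 A2)) = w := enc.injective (q2.trans hencw.symm)
  have e3 : (fun m => decide (B m A2 A3)) = w := enc.injective (q3.trans hencw.symm)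
  have hne01 : A0 ≠ A1 := by
    intro h
    have := congrArg (fun z : CIO n => z.val.1) h
    exact absurd (b.injective this) (by decide)
  have hne03 : A0 ≠ A3 := by
    intro h
    have := congrArg (fun z : CIO n => z.val.1) h
    exact absurd (b.injective this) (by decide)
  have hnlt01 : ¬ A0 < A1 := by
    intro h
    rcases h.le with heq | hlt
    · exact hne01 heq
    · exact absurd hlt (not_lt.mpr (b.strictMono (by decide : (1 : Fin 6) < 2)).le)
  have hlt03 : A0 < A3 :=
    lt_of_le_of_ne (Or.inr (b.strictMono (by decide : (2 : Fin 6) < 3))) hne03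
  have hτf : ¬ τ (fun m => B m A0 A1) := fun h => hnlt01 ((hiff A0 A1 hne01).mpr h)
  have hτt : τ (fun m => B m A0 A3) := (hiff A0 A3 hne03).mp hlt03
  have heq : (fun m => B m A0 A3) = (fun m => B m A0 A1) := by
    funext m
    have htr : ∀ {x y z : CIO n}, B m x y → B m y z → B m x z :=
      fun hxy hyz => (hlin m).toIsPartialOrder.toIsPreorder.toIsTrans.trans _ _ _ hxy hyz
    have hto : ∀ x y : CIO n, B m x y ∨ B m y x :=
      fun x y => (hlin m).toTotal.total x y
    have hanti : ∀ {x y : CIO n}, B m x y → B m y x → x = y :=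
      fun hxy hyx => (hlin m).toIsPartialOrder.toAntisymm.antisymm _ _ hxy hyx
    apply propext
    constructor
    · intro h03
      by_contra hB
      have hwm : w m = false := by rw [← congrFun e1 m]; exact decide_eq_false hB
      have hB2 : ¬ B m A1 A2 := of_decide_eq_false (by rw [congrFun e2 m]; exact hwm)
      have hB3 : ¬ B m A2 A3 := of_decide_eq_false (by rw [congrFun e3 m]; exact hwm)
      have r1 : B m A1 A0 := (hto A0 A1).resolve_left hB
      have r2 : B m A2 A1 := (hto A1 A2).resolve_left hB2
      have r3 : B m A3 A2 := (hto A2 A3).resolve_left hB3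
      have : B m A3 A0 := htr (htr r3 r2) r1
      exact hne03 (hanti h03 this)
    · intro hB
      have hwm : w m = true := by rw [← congrFun e1 m]; exact decide_eq_true hB
      have hB2 : B m A1 A2 := of_decide_eq_true (by rw [congrFun e2 m]; exact hwm)
      have hB3 : B m A2 A3 := of_decide_eq_true (by rw [congrFun e3 m]; exact hwm)
      exact htr (htr hB hB2) hB3
  rw [heq] at hτt
  exact hτf hτt


/-- For every `d ≥ 1`, if `n ≥ Ram(4,6;2^d)` then `bdim I_n > d`. -/
theorem bdim_CIO_gt (d : ℕ) (hd : 1 ≤ d) (n : ℕ) (hn : Ram 4 6 (2 ^ d) ≤ n) :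
    d < bdim (CIO n) := by
  have hex := my_ramseyProp_exists (2 ^ d)
  have hRam : RamseyProp n 4 6 (2 ^ d) := my_ramseyProp_mono (Nat.sInf_mem hex) hn
  have h2d : 0 < 2 ^ d := Nat.pow_pos (by norm_num)
  obtain ⟨H, hH6, -⟩ := hRam (fun _ => ⟨0, h2d⟩)
  have hn6 : 6 ≤ n := by
    have h1 : H.card ≤ Fintype.card (Fin n) := Finset.card_le_univ H
    rw [hH6, Fintype.card_fin] at h1
    exact h1
  haveI : Fintype (CIO n) := Subtype.fintype _
  haveI : Nonempty (CIO n) :=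
    ⟨⟨(⟨0, by omega⟩, ⟨1, by omega⟩), Fin.mk_lt_mk.mpr (by omega)⟩⟩
  obtain ⟨M0, hM0pos, hM0⟩ := exists_hbr (CIO n)
  have hne : {m | 0 < m ∧ HasBooleanRealizer (CIO n) m}.Nonempty := ⟨M0, hM0pos, hM0⟩
  by_contra hcon
  push_neg at hcon
  obtain ⟨hpos, hhbr⟩ := Nat.sInf_mem hne
  exact no_hbr n d hRam (hbr_mono hpos hcon hhbr)
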